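/- arXiv:1507.00205 — 7 statements merged into one kernel-verified Lean document; each statement's English description precedes it below -/
import Mathlib

section
/- Let k and l be positive integers, and let G=(V,E) be a graph on more than k vertices such that every vertex subset S of size exactly k satisfies |N_G(S)| ≥ l, where N_G(S) denotes the external neighborhood of S. Then G contains a path of length l (with l edges). -/
/-!
Run depth-first search, keeping a set `S` of finished vertices and a stack `U` that spans a path,
with the invariant that every external neighbour of `S` lies on `U`. If `G` had no path of length
`l`, the stack would never hold more than `l` vertices. Each step (start a new stack, push a
vertex, or pop the top vertex into `S`) raises `2 |S| + |U|`, which stays below `2 k + l` as long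
as `|S| < k`. So at some point popping the top vertex `b` makes `|S ∪ {b}| = k`; then the at least
`l` external neighbours of `S ∪ {b}` lie on the stack below `b`, which thus spans a path of length
at least `l`.
-/

open scoped Classical

/-- External neighborhood of a vertex set `S` in a graph `G`. -/
noncomputable def extNbhd {V : Type*} [Fintype V] [DecidableEq V]
    (G : SimpleGraph V) (S : Finset V) : Finset V :=
  Finset.univ.filter (fun v => v ∉ S ∧ ∃ u ∈ S, G.Adj u v)

section

variable {V : Type*}

theorem SimpleGraph.exists_isPath_length_eq_of_isChain {G : SimpleGraph V} {U : List V} {l : ℕ}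
    (hchain : U.IsChain G.Adj) (hnodup : U.Nodup) (hlen : l < U.length) :
    ∃ (u v : V) (p : G.Walk u v), p.IsPath ∧ p.length = l := by
  have hne : U.take (l + 1) ≠ [] :=
    List.ne_nil_of_length_pos (by rw [List.length_take]; omega)
  refine ⟨_, _, Walk.ofSupport _ hne (hchain.take _), Walk.IsPath.mk' ?_, ?_⟩
  · rw [Walk.support_ofSupport]
    exact hnodup.sublist (List.take_sublist _ _)
  · rw [Walk.length_ofSupport, List.length_take]
    omega

variable [Fintype V] [DecidableEq V] {G : SimpleGraph V} {k l : ℕ} {S : Finset V} {U : List V}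

theorem mem_extNbhd {x : V} : x ∈ extNbhd G S ↔ x ∉ S ∧ ∃ u ∈ S, G.Adj u x := by
  simp only [extNbhd, Finset.mem_filter, Finset.mem_univ, true_and]

/-- A state of depth-first search with finished set `S` and stack `U`, listed top first. -/
structure IsDFSState (G : SimpleGraph V) (k : ℕ) (S : Finset V) (U : List V) : Prop where
  isChain : U.IsChain G.Adj
  nodup : U.Nodup
  notMem_finished : ∀ x ∈ U, x ∉ S
  extNbhd_subset : ∀ x ∈ extNbhd G S, x ∈ U
  card_lt : S.card < k

namespace IsDFSState

theorem empty (hk : 0 < k) : IsDFSState G k ∅ [] where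
  isChain := List.isChain_nil
  nodup := List.nodup_nil
  notMem_finished := by simp
  extNbhd_subset := by simp [mem_extNbhd]
  card_lt := hk

theorem length_le (h : IsDFSState G k S U)
    (hno : ∀ (u v : V) (p : G.Walk u v), p.IsPath → p.length ≠ l) : U.length ≤ l := by
  by_contra! hlen
  obtain ⟨u, v, p, hp, hpl⟩ := G.exists_isPath_length_eq_of_isChain h.isChain h.nodup hlen
  exact hno u v p hp hpl

theorem start (h : IsDFSState G k S []) {v : V} (hv : v ∉ S) : IsDFSState G k S [v] where
  isChain := List.isChain_singleton v
  nodup := List.nodup_singleton v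
  notMem_finished := by simpa using hv
  extNbhd_subset x hx := absurd (h.extNbhd_subset x hx) List.not_mem_nil
  card_lt := h.card_lt

theorem push {b w : V} (h : IsDFSState G k S (b :: U)) (hadj : G.Adj b w) (hwS : w ∉ S)
    (hwU : w ∉ b :: U) : IsDFSState G k S (w :: b :: U) where
  isChain := h.isChain.cons (by simpa using hadj.symm)
  nodup := List.nodup_cons.2 ⟨hwU, h.nodup⟩
  notMem_finished x hx := by
    rcases List.mem_cons.1 hx with rfl | hx
    exacts [hwS, h.notMem_finished x hx]
  extNbhd_subset x hx := List.mem_cons_of_mem w (h.extNbhd_subset x hx)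
  card_lt := h.card_lt

theorem extNbhd_insert_subset {b : V} (h : IsDFSState G k S (b :: U))
    (hnbr : ∀ w, G.Adj b w → w ∈ S ∨ w ∈ b :: U) :
    ∀ x ∈ extNbhd G (insert b S), x ∈ U := by
  intro x hx
  obtain ⟨hxbS, u, hu, hux⟩ := mem_extNbhd.1 hx
  rw [Finset.mem_insert, not_or] at hxbS
  have hxbU : x ∈ b :: U := by
    rcases Finset.mem_insert.1 hu with rfl | hu
    · exact (hnbr x hux).resolve_left hxbS.2
    · exact h.extNbhd_subset x (mem_extNbhd.2 ⟨hxbS.2, u, hu, hux⟩)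
  exact (List.mem_cons.1 hxbU).resolve_left hxbS.1

theorem pop {b : V} (h : IsDFSState G k S (b :: U))
    (hnbr : ∀ w, G.Adj b w → w ∈ S ∨ w ∈ b :: U)
    (hcard : (insert b S).card < k) : IsDFSState G k (insert b S) U where
  isChain := h.isChain.tail
  nodup := (List.nodup_cons.1 h.nodup).2
  notMem_finished x hx := by
    rw [Finset.mem_insert, not_or]
    exact ⟨fun hxb => (List.nodup_cons.1 h.nodup).1 (hxb ▸ hx),
      h.notMem_finished x (List.mem_cons_of_mem b hx)⟩
  extNbhd_subset := h.extNbhd_insert_subset hnbr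
  card_lt := hcard

/-- Finishing `b` cannot complete `k` vertices: their external neighbours would fill the stack. -/
theorem card_insert_lt {b : V} (h : IsDFSState G k S (b :: U))
    (hnbr : ∀ w, G.Adj b w → w ∈ S ∨ w ∈ b :: U)
    (hexp : ∀ S : Finset V, S.card = k → l ≤ (extNbhd G S).card)
    (hno : ∀ (u v : V) (p : G.Walk u v), p.IsPath → p.length ≠ l) :
    (insert b S).card < k := by
  by_contra! hge
  have hk : (insert b S).card = k :=
    le_antisymm ((Finset.card_insert_le b S).trans h.card_lt) hge
  have hlU : l ≤ U.length :=
    calc l ≤ (extNbhd G (insert b S)).card := hexp _ hk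
      _ ≤ U.toFinset.card := Finset.card_le_card fun x hx => by
          simpa using h.extNbhd_insert_subset hnbr x hx
      _ ≤ U.length := List.toFinset_card_le U
  have hstack := h.length_le hno
  rw [List.length_cons] at hstack
  omega

theorem exists_next (h : IsDFSState G k S U) (hcard : k < Fintype.card V)
    (hexp : ∀ S : Finset V, S.card = k → l ≤ (extNbhd G S).card)
    (hno : ∀ (u v : V) (p : G.Walk u v), p.IsPath → p.length ≠ l) :
    ∃ S' U', IsDFSState G k S' U' ∧ 2 * S.card + U.length < 2 * S'.card + U'.length := by
  cases U with
  | nil =>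
    obtain ⟨v, hv⟩ : (Sᶜ).Nonempty := by
      rw [← Finset.card_pos, Finset.card_compl]
      have := h.card_lt
      omega
    exact ⟨S, [v], h.start (Finset.mem_compl.1 hv), by simp⟩
  | cons b U =>
    by_cases hnbr : ∀ w, G.Adj b w → w ∈ S ∨ w ∈ b :: U
    · refine ⟨insert b S, U, h.pop hnbr (h.card_insert_lt hnbr hexp hno), ?_⟩
      rw [Finset.card_insert_of_notMem (h.notMem_finished b List.mem_cons_self),
        List.length_cons]
      omega
    · push Not at hnbr
      obtain ⟨w, hadj, hwS, hwU⟩ := hnbr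
      exact ⟨S, w :: b :: U, h.push hadj hwS hwU, by simp⟩

end IsDFSState

end

theorem stmt_0_general {V : Type*} [Fintype V] [DecidableEq V] (G : SimpleGraph V)
    (k l : ℕ) (hk : 0 < k) (hcard : k < Fintype.card V)
    (hexp : ∀ S : Finset V, S.card = k → l ≤ (extNbhd G S).card) :
    ∃ (u v : V) (p : G.Walk u v), p.IsPath ∧ p.length = l := by
  by_contra! hno
  have hreach : ∀ n, ∃ S U, IsDFSState G k S U ∧ n ≤ 2 * S.card + U.length := by
    intro n
    induction n with
    | zero => exact ⟨∅, [], .empty hk, Nat.zero_le _⟩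
    | succ n ih =>
      obtain ⟨S, U, h, hn⟩ := ih
      obtain ⟨S', U', h', hlt⟩ := h.exists_next hcard hexp hno
      exact ⟨S', U', h', by omega⟩
  obtain ⟨S, U, h, hn⟩ := hreach (2 * k + l)
  have := h.card_lt
  have := h.length_le hno
  omega

theorem stmt_0 {V : Type*} [Fintype V] [DecidableEq V] (G : SimpleGraph V)
    (k l : ℕ) (hk : 0 < k) (hl : 0 < l) (hcard : k < Fintype.card V)
    (hexp : ∀ S : Finset V, S.card = k → l ≤ (extNbhd G S).card) :
    ∃ (u v : V) (p : G.Walk u v), p.IsPath ∧ p.length = l :=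
  stmt_0_general G k l hk hcard hexp
end

section
/- Let k < n be positive integers. If G=(V,E) is a graph on n vertices containing at least one edge between any two disjoint vertex subsets S, T ⊂ V with |S| = |T| = k, then G contains a path of length at least n − 2k + 1 (measured in edges). -/
/-!
Run a depth-first search, keeping the finished vertices `S`, the unvisited vertices `T` and the
stack, which is a path. There is never an edge between `S` and `T`, and every step either moves a
vertex from `T` onto the stack or pops a vertex into `S`, so `#T - #S` drops by exactly one per step
and at some moment `#S = #T`. The hypothesis then forces `#S = #T < k`, and the stack is a path
through the remaining `n - 2 #S ≥ n - 2k + 2` vertices.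
-/

open Finset SimpleGraph

namespace SimpleGraph

variable {V : Type*} {G : SimpleGraph V} {L : List V}

theorem exists_isPath_length_add_one_ge_of_isChain [Nonempty V] (hchain : L.IsChain G.Adj)
    (hnodup : L.Nodup) : ∃ (u v : V) (p : G.Walk u v), p.IsPath ∧ L.length ≤ p.length + 1 := by
  cases L with
  | nil => exact ⟨Classical.arbitrary V, _, .nil, .nil, by simp⟩
  | cons x L =>
    refine ⟨_, _, .ofSupport (x :: L) (List.cons_ne_nil x L) hchain, ?_, ?_⟩
    · rw [Walk.isPath_def, Walk.support_ofSupport]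
      exact hnodup
    · rw [Walk.length_ofSupport]
      simp

variable [Fintype V] [DecidableEq V] {S T : Finset V} {x t : V}

/-- A snapshot of depth-first search: `S` is finished, `T` is unvisited, and the stack `L`
(top first) holds the other vertices. -/
structure IsDFSState (G : SimpleGraph V) (S T : Finset V) (L : List V) : Prop where
  disjoint : Disjoint S T
  not_adj : ∀ s ∈ S, ∀ t ∈ T, ¬ G.Adj s t
  isChain : L.IsChain G.Adj
  nodup : L.Nodup
  toFinset_eq : L.toFinset = (S ∪ T)ᶜ

theorem isDFSState_empty_univ : G.IsDFSState ∅ univ [] where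
  disjoint := disjoint_empty_left _
  not_adj := by simp
  isChain := .nil
  nodup := List.nodup_nil
  toFinset_eq := by simp

namespace IsDFSState

theorem mem_iff (h : G.IsDFSState S T L) : x ∈ L ↔ x ∉ S ∧ x ∉ T := by
  rw [← List.mem_toFinset, h.toFinset_eq]
  simp

theorem length_add_card_add_card (h : G.IsDFSState S T L) :
    L.length + #S + #T = Fintype.card V := by
  have hle := card_le_univ (S ∪ T)
  rw [card_union_of_disjoint h.disjoint] at hle
  rw [← List.toFinset_card_of_nodup h.nodup, h.toFinset_eq, card_compl,
    card_union_of_disjoint h.disjoint]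
  omega

theorem push (h : G.IsDFSState S T L) (ht : t ∈ T) (hadj : ∀ x ∈ L.head?, G.Adj t x) :
    G.IsDFSState S (T.erase t) (t :: L) where
  disjoint := h.disjoint.mono_right (erase_subset _ _)
  not_adj s hs t' ht' := h.not_adj s hs t' (mem_of_mem_erase ht')
  isChain := List.isChain_cons.mpr ⟨hadj, h.isChain⟩
  nodup := List.nodup_cons.mpr ⟨fun htL => (h.mem_iff.mp htL).2 ht, h.nodup⟩
  toFinset_eq := by
    have htS : t ∉ S := disjoint_right.mp h.disjoint ht
    ext y
    by_cases hy : y = t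
    · simp [hy, htS]
    · simp [hy, h.mem_iff]

theorem pop (h : G.IsDFSState S T (x :: L)) (hx : ∀ t ∈ T, ¬ G.Adj x t) :
    G.IsDFSState (insert x S) T L where
  disjoint := disjoint_insert_left.mpr ⟨(h.mem_iff.mp List.mem_cons_self).2, h.disjoint⟩
  not_adj s hs t ht := by
    rcases mem_insert.mp hs with rfl | hs
    · exact hx t ht
    · exact h.not_adj s hs t ht
  isChain := h.isChain.tail
  nodup := h.nodup.of_cons
  toFinset_eq := by
    have hxL : x ∉ L := (List.nodup_cons.mp h.nodup).1
    ext y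
    by_cases hy : y = x
    · simp [hy, hxL]
    · simpa [hy] using h.mem_iff (x := y)

theorem step (h : G.IsDFSState S T L) (hT : T.Nonempty) :
    ∃ S' T' L', G.IsDFSState S' T' L' ∧ #S' + #T = #S + #T' + 1 := by
  by_cases hpush : ∃ t ∈ T, ∀ x ∈ L.head?, G.Adj t x
  · obtain ⟨t, ht, hadj⟩ := hpush
    refine ⟨S, T.erase t, t :: L, h.push ht hadj, ?_⟩
    have := card_erase_add_one ht
    omega
  · push Not at hpush
    cases L with
    | nil =>
      obtain ⟨t, ht⟩ := hT
      simpa using hpush t ht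
    | cons x L =>
      have hx : ∀ t ∈ T, ¬ G.Adj x t := fun t ht hxt => by
        simpa [hxt.symm] using hpush t ht
      refine ⟨insert x S, T, L, h.pop hx, ?_⟩
      rw [card_insert_of_notMem (h.mem_iff.mp List.mem_cons_self).1]
      omega

theorem exists_card_eq (h : G.IsDFSState S T L) (hle : #S ≤ #T) :
    ∃ S' T' L', G.IsDFSState S' T' L' ∧ #S' = #T' := by
  induction hd : #T - #S generalizing S T L with
  | zero => exact ⟨S, T, L, h, by omega⟩
  | succ d ih =>
    obtain ⟨S', T', L', h', hcard⟩ := h.step (card_pos.mp (by omega))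
    exact ih h' (by omega) (by omega)

end IsDFSState

theorem exists_isDFSState_card_eq : ∃ S T L, G.IsDFSState S T L ∧ #S = #T :=
  isDFSState_empty_univ.exists_card_eq (by simp)

end SimpleGraph

theorem stmt_1_general {V : Type*} [Fintype V] (G : SimpleGraph V)
    (n k : ℕ) (hn : Fintype.card V = n) (hkn : k < n)
    (hcross : ∀ S T : Finset V, Disjoint S T → S.card = k → T.card = k →
      ∃ s ∈ S, ∃ t ∈ T, G.Adj s t) :
    ∃ (u v : V) (p : G.Walk u v), p.IsPath ∧ n + 1 ≤ p.length + 2 * k := by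
  classical
  obtain ⟨S, T, L, hdfs, hST⟩ := G.exists_isDFSState_card_eq
  have hSk : #S < k := by
    by_contra! hkS
    obtain ⟨S₀, hS₀, hS₀k⟩ := exists_subset_card_eq hkS
    obtain ⟨T₀, hT₀, hT₀k⟩ := exists_subset_card_eq (hST ▸ hkS)
    obtain ⟨s, hs, t, ht, hadj⟩ := hcross S₀ T₀ (hdfs.disjoint.mono hS₀ hT₀) hS₀k hT₀k
    exact hdfs.not_adj s (hS₀ hs) t (hT₀ ht) hadj
  have : Nonempty V := Fintype.card_pos_iff.mp (by omega)
  obtain ⟨u, v, p, hp, hlen⟩ := exists_isPath_length_add_one_ge_of_isChain hdfs.isChain hdfs.nodup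
  have := hdfs.length_add_card_add_card
  exact ⟨u, v, p, hp, by omega⟩

theorem stmt_1 {V : Type*} [Fintype V] [DecidableEq V] (G : SimpleGraph V)
    (n k : ℕ) (hn : Fintype.card V = n) (hk : 0 < k) (hkn : k < n)
    (hcross : ∀ S T : Finset V, Disjoint S T → S.card = k → T.card = k →
      ∃ s ∈ S, ∃ t ∈ T, G.Adj s t) :
    ∃ (u v : V) (p : G.Walk u v), p.IsPath ∧ n + 1 ≤ p.length + 2 * k :=
  stmt_1_general G n k hn hkn hcross
end

section
/- Let k < n be positive integers, and let D be a directed graph on n vertices such that for every ordered pair of disjoint vertex subsets S, T with |S| = |T| = k, there is a directed edge from some vertex of S to some vertex of T. Then D contains a directed path of length at least n − 2k + 1. -/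
/-!
Run a depth-first search backwards: keep a path `W`, a set `B` of retired vertices with `|B| < k`
and the unexplored rest `Y`, with no edge from `Y` into `B`. Extend `W` at its head by an
in-neighbour from `Y` if there is one; otherwise retire the head into `B`. Once `|B| = k - 1` and
the head has no in-neighbour in `Y`, the head together with `B` is a `k`-set that receives no edge
from `Y`, so `|Y| < k` and the path has at least `n - 2(k - 1)` vertices.
-/

section

variable {V : Type*}

def HasCrossingEdges (D : V → V → Prop) (k : ℕ) : Prop :=
  ∀ S T : Finset V, Disjoint S T → S.card = k → T.card = k → ∃ s ∈ S, ∃ t ∈ T, D s t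

theorem HasCrossingEdges.card_lt {D : V → V → Prop} {k : ℕ} (hD : HasCrossingEdges D k)
    {S T : Finset V} (hST : Disjoint S T) (hT : T.card = k) (hno : ∀ s ∈ S, ∀ t ∈ T, ¬ D s t) : S.card < k := by
  by_contra! hS
  obtain ⟨S', hS'S, hS'⟩ := Finset.exists_subset_card_eq hS
  obtain ⟨s, hs, t, ht, hst⟩ := hD S' T (hST.mono_left hS'S) hS' hT
  exact hno s (hS'S hs) t ht hst

namespace BackwardDFS

variable [Fintype V] [DecidableEq V] {D : V → V → Prop}

def unexplored (B : Finset V) (W : List V) : Finset V := (B ∪ W.toFinset)ᶜ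

theorem disjoint_unexplored {B : Finset V} {W : List V} : Disjoint (unexplored B W) B :=
  disjoint_compl_left.mono_right Finset.subset_union_left

theorem unexplored_cons (B : Finset V) (y : V) (W : List V) :
    unexplored B (y :: W) = (unexplored B W).erase y := by
  ext x
  simp only [unexplored, Finset.mem_erase, Finset.mem_compl, Finset.mem_union,
    List.mem_toFinset, List.mem_cons]
  tauto

theorem unexplored_insert (B : Finset V) (h : V) (W : List V) :
    unexplored (insert h B) W = unexplored B (h :: W) := by
  ext x
  simp only [unexplored, Finset.mem_compl, Finset.mem_union, Finset.mem_insert,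
    List.mem_toFinset, List.mem_cons]
  tauto

variable (D) in
structure IsState (B : Finset V) (W : List V) : Prop where
  nodup : W.Nodup
  chain : W.IsChain D
  disjoint : Disjoint B W.toFinset
  no_edge : ∀ y ∈ unexplored B W, ∀ b ∈ B, ¬ D y b

namespace IsState

variable {B : Finset V} {W : List V}

theorem nil : IsState D ∅ [] where
  nodup := List.nodup_nil
  chain := List.isChain_nil
  disjoint := Finset.disjoint_empty_left _
  no_edge := by simp

theorem cons (hs : IsState D B W) {y : V} (hy : y ∈ unexplored B W)
    (hyW : ∀ h ∈ W.head?, D y h) : IsState D B (y :: W) where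
  nodup := by
    refine List.nodup_cons.mpr ⟨fun hyW => ?_, hs.nodup⟩
    simp [unexplored, hyW] at hy
  chain := hs.chain.cons hyW
  disjoint := by
    rw [List.toFinset_cons, Finset.disjoint_insert_right]
    exact ⟨fun hyB => by simp [unexplored, hyB] at hy, hs.disjoint⟩
  no_edge := by
    rw [unexplored_cons]
    exact fun x hx => hs.no_edge x (Finset.mem_of_mem_erase hx)

theorem retire {h : V} {w : List V} (hs : IsState D B (h :: w))
    (hh : ∀ y ∈ unexplored B (h :: w), ¬ D y h) : IsState D (insert h B) w where
  nodup := (List.nodup_cons.mp hs.nodup).2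
  chain := hs.chain.tail
  disjoint := by
    have hnd := hs.nodup
    have hdisj := hs.disjoint
    rw [Finset.disjoint_insert_left]
    simp only [List.toFinset_cons, Finset.disjoint_insert_right] at hdisj
    exact ⟨by simpa using (List.nodup_cons.mp hnd).1, hdisj.2⟩
  no_edge := by
    rw [unexplored_insert]
    intro y hy b hb
    rcases Finset.mem_insert.mp hb with rfl | hb
    · exact hh y hy
    · exact hs.no_edge y hy b hb

theorem card_add_length_add_card_unexplored (hs : IsState D B W) :
    B.card + W.length + (unexplored B W).card = Fintype.card V := by
  rw [unexplored, ← List.toFinset_card_of_nodup hs.nodup,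
    ← Finset.card_union_of_disjoint hs.disjoint, Finset.card_add_card_compl]

theorem exists_long_path {k : ℕ} (hD : HasCrossingEdges D k) (hs : IsState D B W)
    (hB : B.card < k) :
    ∃ l : List V, l.Nodup ∧ l.IsChain D ∧ Fintype.card V + 2 ≤ l.length + 2 * k := by
  induction hμ : 2 * (unexplored B W).card + W.length using Nat.strong_induction_on
    generalizing B W with
  | _ μ ih =>
  subst hμ
  by_cases hY : (unexplored B W).card < k
  · have := hs.card_add_length_add_card_unexplored
    exact ⟨W, hs.nodup, hs.chain, by omega⟩
  have extend : ∀ y ∈ unexplored B W, (∀ h ∈ W.head?, D y h) → _ := fun y hy hyW => by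
    have := Finset.card_erase_lt_of_mem hy
    refine ih _ ?_ (hs.cons hy hyW) hB rfl
    rw [unexplored_cons, List.length_cons]
    omega
  rcases W with _ | ⟨h, w⟩
  · obtain ⟨y, hy⟩ : (unexplored B []).Nonempty := Finset.card_pos.mp (by omega)
    exact extend y hy (by simp)
  by_cases hin : ∃ y ∈ unexplored B (h :: w), D y h
  · obtain ⟨y, hy, hyh⟩ := hin
    exact extend y hy (by simpa using hyh)
  push Not at hin
  have hretire := hs.retire hin
  have hhB : h ∉ B := Finset.disjoint_right.mp hs.disjoint (by simp)
  by_cases hB' : (insert h B).card < k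
  · refine ih _ ?_ hretire hB' rfl
    rw [unexplored_insert, List.length_cons]
    omega
  have hcard : (insert h B).card = k := by
    rw [Finset.card_insert_of_notMem hhB] at hB' ⊢
    omega
  exact absurd (hD.card_lt disjoint_unexplored hcard hretire.no_edge) (by rwa [unexplored_insert])

end IsState

end BackwardDFS

end

theorem stmt_3_general {V : Type*} [Fintype V] [DecidableEq V] (D : V → V → Prop)
    (n k : ℕ) (hn : Fintype.card V = n) (hk : 0 < k)
    (hcross : ∀ S T : Finset V, Disjoint S T → S.card = k → T.card = k →
      ∃ s ∈ S, ∃ t ∈ T, D s t) :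
    -- a directed path of length (in edges) at least n - 2k + 1,
    -- i.e. a list of at least n - 2k + 2 distinct vertices with consecutive directed edges
    ∃ l : List V, l.Nodup ∧ l.Chain' D ∧ n + 2 ≤ l.length + 2 * k := by
  subst hn
  exact BackwardDFS.IsState.nil.exists_long_path hcross (by simpa using hk)

theorem stmt_3 {V : Type*} [Fintype V] [DecidableEq V] (D : V → V → Prop)
    (n k : ℕ) (hn : Fintype.card V = n) (hk : 0 < k) (hkn : k < n)
    (hcross : ∀ S T : Finset V, Disjoint S T → S.card = k → T.card = k →
      ∃ s ∈ S, ∃ t ∈ T, D s t) :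
    -- a directed path of length (in edges) at least n - 2k + 1,
    -- i.e. a list of at least n - 2k + 2 distinct vertices with consecutive directed edges
    ∃ l : List V, l.Nodup ∧ l.Chain' D ∧ n + 2 ≤ l.length + 2 * k :=
  stmt_3_general D n k hn hk hcross
end

section
/- Let G be a graph, let P = x_0 x_1 … x_h be a longest path in G, and let 𝒫 be the set of all paths obtainable from P by sequences of elementary rotations keeping the endpoint x_0 fixed. Let R be the set of endpoints (other than x_0) of paths in 𝒫, and let R⁻ and R⁺ be the sets of vertices immediately preceding and following, respectively, the vertices of R along P. Then N_G(R) ⊆ R⁻ ∪ R⁺. -/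
/-! Pósa's rotation argument. Suppose `w ∉ R` is adjacent to an end `v ∈ R`, but no vertex of `R`
is a neighbour of `w` along `P`. Rotating `x₀ … x_h` at `xᵢ` creates only the path edge `xᵢ x_h`.
If `w = x_h` then `w` is an end, and if `w = xᵢ` then its old successor `xᵢ₊₁` becomes an end.
So, inductively, the neighbours of `w` along every rotated path are among its neighbours along `P`.
Now let `Q` be a rotated path ending at `v`. As `P` is longest, `Q` cannot be extended by `w`,
so `w` lies on `Q`, and rotating `Q` with the edge `wv` turns the successor of `w` on `Q` into an
end, which is then a neighbour of `w` along `P`. -/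

/-- A (simple) path in `G`, represented as the list of its vertices. -/
def IsPathList {V : Type*} (G : SimpleGraph V) (l : List V) : Prop :=
  l.Chain' G.Adj ∧ l.Nodup

/-- `ElemRot G q q'` : the path `q'` is obtained from the path `q = x₀ … xᵢ xᵢ₊₁ … x_h`
by one elementary rotation at `xᵢ` (with `i < h - 1`), using the edge `(xᵢ, x_h)` of `G`:
`q' = x₀ … xᵢ x_h x_{h-1} … x_{i+1}`.  The start `x₀` is kept fixed. -/
def ElemRot {V : Type*} (G : SimpleGraph V) (q q' : List V) : Prop :=
  ∃ (a b : List V) (x y : V), b ≠ [] ∧ G.Adj x y ∧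
    q = a ++ x :: (b ++ [y]) ∧ q' = a ++ x :: y :: b.reverse

/-- The set of ends (other than the start of `P`) of the paths obtainable from `P`
by sequences of elementary rotations. -/
def rotEnds {V : Type*} (G : SimpleGraph V) (P : List V) : Set V :=
  {v | ∃ Q : List V, Relation.ReflTransGen (ElemRot G) P Q ∧
        Q.getLast? = some v ∧ P.head? ≠ some v}

/-- Vertices immediately preceding a vertex of `R` along the list `P`. -/
def predAlong {V : Type*} (P : List V) (R : Set V) : Set V :=
  {u | ∃ v ∈ R, ∃ i : ℕ, P[i]? = some u ∧ P[i + 1]? = some v}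

/-- Vertices immediately following a vertex of `R` along the list `P`. -/
def succAlong {V : Type*} (P : List V) (R : Set V) : Set V :=
  {u | ∃ v ∈ R, ∃ i : ℕ, P[i]? = some v ∧ P[i + 1]? = some u}

open List

namespace List

variable {α : Type*}

theorem pair_infix_iff_getElem? {u v : α} {l : List α} :
    [u, v] <:+: l ↔ ∃ i : ℕ, l[i]? = some u ∧ l[i + 1]? = some v := by
  rw [infix_iff_getElem?]
  constructor
  · rintro ⟨k, -, h⟩
    exact ⟨k, by simpa using h 0, by simpa [add_comm] using h 1⟩
  · rintro ⟨i, hu, hv⟩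
    refine ⟨i, by grind, fun j hj => ?_⟩
    match j, hj with
    | 0, _ => simpa using hu
    | 1, _ => simpa [add_comm] using hv

theorem pair_infix_append {u v : α} {s t : List α} :
    [u, v] <:+: s ++ t ↔
      [u, v] <:+: s ∨ [u, v] <:+: t ∨ (s.getLast? = some u ∧ t.head? = some v) := by
  simp only [pair_infix_iff_getElem?, getLast?_eq_getElem?, head?_eq_getElem?]
  constructor
  · rintro ⟨i, hu, hv⟩
    rcases lt_trichotomy (i + 1) s.length with h | h | h
    · exact .inl ⟨i, by grind, by grind⟩
    · exact .inr (.inr (by grind))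
    · exact .inr (.inl ⟨i - s.length, by grind, by grind⟩)
  · rintro (⟨i, hu, hv⟩ | ⟨i, hu, hv⟩ | ⟨hu, hv⟩)
    · exact ⟨i, by grind, by grind⟩
    · exact ⟨s.length + i, by grind, by grind⟩
    · exact ⟨s.length - 1, by grind, by grind⟩

theorem exists_pair_infix_of_mem {w : α} {l : List α} (hw : w ∈ l)
    (hlast : l.getLast? ≠ some w) : ∃ z, [w, z] <:+: l := by
  obtain ⟨s, t, rfl⟩ := append_of_mem hw
  cases t with
  | nil => simp at hlast
  | cons z t => exact ⟨z, s, t, by simp⟩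

end List

section AdjAlong

variable {α : Type*}

def AdjAlong (l : List α) (u v : α) : Prop :=
  [u, v] <:+: l ∨ [v, u] <:+: l

theorem mem_predAlong_union_succAlong_iff {P : List α} {R : Set α} {w : α} :
    w ∈ predAlong P R ∪ succAlong P R ↔ ∃ z ∈ R, AdjAlong P w z := by
  simp only [AdjAlong, pair_infix_iff_getElem?, Set.mem_union, predAlong, succAlong]
  grind

theorem pair_infix_of_rotate {a b : List α} {x y u v : α}
    (h : [u, v] <:+: a ++ x :: y :: b.reverse) :
    [u, v] <:+: a ++ x :: (b ++ [y]) ∨ [v, u] <:+: a ++ x :: (b ++ [y]) ∨ (u = x ∧ v = y) := by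
  rw [show a ++ x :: y :: b.reverse = (a ++ [x]) ++ (b ++ [y]).reverse by simp,
    pair_infix_append] at h
  rcases h with h | h | ⟨hu, hv⟩
  · exact .inl (h.trans (IsPrefix.isInfix ⟨b ++ [y], by simp⟩))
  · exact .inr (.inl (((reverse_infix (l₁ := [v, u])).mp h).trans ⟨a ++ [x], [], by simp⟩))
  · simp_all

theorem adjAlong_of_rotate {a b : List α} {x y u v : α}
    (h : AdjAlong (a ++ x :: y :: b.reverse) u v) :
    AdjAlong (a ++ x :: (b ++ [y])) u v ∨ (u = x ∧ v = y) ∨ (u = y ∧ v = x) := by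
  rcases h with h | h
  · rcases pair_infix_of_rotate h with h | h | h
    exacts [.inl (.inl h), .inl (.inr h), .inr (.inl h)]
  · rcases pair_infix_of_rotate h with h | h | h
    exacts [.inl (.inr h), .inl (.inl h), .inr (.inr h.symm)]

end AdjAlong

section ElemRot

variable {V : Type*} {G : SimpleGraph V}

theorem ElemRot.perm {q q' : List V} (h : ElemRot G q q') : q' ~ q := by
  obtain ⟨a, b, x, y, -, -, rfl, rfl⟩ := h
  refine .append_left a (.cons x ?_)
  calc y :: b.reverse ~ y :: b := b.reverse_perm.cons y
    _ ~ b ++ [y] := (perm_append_singleton y b).symm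

theorem ElemRot.head?_eq {q q' : List V} (h : ElemRot G q q') : q'.head? = q.head? := by
  obtain ⟨a, b, x, y, -, -, rfl, rfl⟩ := h
  cases a <;> simp

theorem IsPathList.elemRot {q q' : List V} (hq : IsPathList G q) (h : ElemRot G q q') :
    IsPathList G q' := by
  refine ⟨?_, h.perm.nodup_iff.mpr hq.2⟩
  obtain ⟨a, b, x, y, -, hxy, rfl, rfl⟩ := h
  obtain ⟨hc, -⟩ := hq
  rw [Chain', isChain_append] at hc ⊢
  obtain ⟨hca, hcx, hlink⟩ := hc
  refine ⟨hca, ?_, by simpa using hlink⟩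
  rw [isChain_cons] at hcx ⊢
  refine ⟨by simpa using hxy, ?_⟩
  rw [show y :: b.reverse = (b ++ [y]).reverse by simp, isChain_reverse]
  exact hcx.2.imp fun _ _ h => h.symm

variable {P Q : List V}

theorem IsPathList.reflTransGen_elemRot (hP : IsPathList G P)
    (h : Relation.ReflTransGen (ElemRot G) P Q) : IsPathList G Q := by
  induction h with
  | refl => exact hP
  | tail _ hstep ih => exact ih.elemRot hstep

theorem perm_of_reflTransGen_elemRot (h : Relation.ReflTransGen (ElemRot G) P Q) : Q ~ P := by
  induction h with
  | refl => rfl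
  | tail _ hstep ih => exact hstep.perm.trans ih

theorem head?_eq_of_reflTransGen_elemRot (h : Relation.ReflTransGen (ElemRot G) P Q) :
    Q.head? = P.head? := by
  induction h with
  | refl => rfl
  | tail _ hstep ih => exact hstep.head?_eq.trans ih

theorem mem_rotEnds_of_getLast?_eq (hP : IsPathList G P)
    (h : Relation.ReflTransGen (ElemRot G) P Q) {z : V}
    (hz : Q.getLast? = some z) (hlen : 2 ≤ Q.length) : z ∈ rotEnds G P := by
  refine ⟨Q, h, hz, fun hhead => ?_⟩
  rw [← head?_eq_of_reflTransGen_elemRot h] at hhead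
  have hnodup := (hP.reflTransGen_elemRot h).2
  obtain ⟨u, d, t, rfl⟩ : ∃ u d t, Q = u :: d :: t := by
    match Q, hlen with
    | u :: d :: t, _ => exact ⟨u, d, t, rfl⟩
  obtain rfl : u = z := by simpa using hhead
  rw [getLast?_cons_cons] at hz
  exact (nodup_cons.mp hnodup).1 (mem_of_getLast? hz)

theorem IsPathList.concat {v w : V} (hQ : IsPathList G Q) (hv : Q.getLast? = some v)
    (hvw : G.Adj v w) (hw : w ∉ Q) : IsPathList G (Q ++ [w]) :=
  ⟨hQ.1.append (isChain_singleton w) (by simp [hv, hvw]),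
    hQ.2.append (nodup_singleton w) (by simpa using hw)⟩

theorem exists_elemRot_getLast?_eq {v w z : V} (hv : Q.getLast? = some v)
    (hwz : [w, z] <:+: Q) (hzv : z ≠ v) (hwv : G.Adj w v) :
    ∃ Q', ElemRot G Q Q' ∧ Q'.getLast? = some z := by
  obtain ⟨s, t, rfl⟩ := hwz
  rcases eq_nil_or_concat t with rfl | ⟨t, v', rfl⟩
  · simp_all
  · obtain rfl : v = v' := by simpa [getLast?_cons] using hv.symm
    exact ⟨s ++ w :: v :: (z :: t).reverse, ⟨s, z :: t, w, v, by simp, hwv, by simp, rfl⟩,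
      by simp [getLast?_cons]⟩

theorem adjAlong_of_reflTransGen_elemRot {w : V} (hP : IsPathList G P) (hw : w ∉ rotEnds G P)
    (hwR : ∀ z ∈ rotEnds G P, ¬AdjAlong P w z) (h : Relation.ReflTransGen (ElemRot G) P Q)
    {z : V} (hz : AdjAlong Q w z) : AdjAlong P w z := by
  induction h generalizing z with
  | refl => exact hz
  | @tail q q' hq hstep ih =>
    have hq' := hq.tail hstep
    obtain ⟨a, b, x, y, hb, -, rfl, rfl⟩ := hstep
    obtain ⟨c, b, rfl⟩ := exists_cons_of_ne_nil hb
    rcases adjAlong_of_rotate hz with hz | ⟨rfl, rfl⟩ | ⟨rfl, rfl⟩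
    · exact ih hz
    · exact absurd (ih (.inl ⟨a, b ++ [z], by simp⟩))
        (hwR c (mem_rotEnds_of_getLast?_eq hP hq' (by simp [getLast?_cons]) (by simp; omega)))
    · exact absurd
        (mem_rotEnds_of_getLast?_eq hP hq (by simp [getLast?_cons]) (by simp; omega)) hw

end ElemRot

theorem stmt_4_general {V : Type*} (G : SimpleGraph V)
    (P : List V)
    (hpath : IsPathList G P)
    (hlongest : ∀ Q : List V, IsPathList G Q → Q.length ≤ P.length) :
    ∀ w : V, w ∉ rotEnds G P → (∃ v ∈ rotEnds G P, G.Adj v w) →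
      w ∈ predAlong P (rotEnds G P) ∪ succAlong P (rotEnds G P) := by
  rintro w hw ⟨v, hv, hvw⟩
  rw [mem_predAlong_union_succAlong_iff]
  by_contra! hwR
  have hwv : w ≠ v := fun h => hw (h ▸ hv)
  obtain ⟨Q, hPQ, hQv, -⟩ := id hv
  have hQ := hpath.reflTransGen_elemRot hPQ
  have hwQ : w ∈ Q := by
    by_contra hwQ
    have := hlongest _ (hQ.concat hQv hvw hwQ)
    rw [length_append, (perm_of_reflTransGen_elemRot hPQ).length_eq] at this
    simp at this
  obtain ⟨z, hwz⟩ := exists_pair_infix_of_mem hwQ (by simpa [hQv] using hwv.symm)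
  have hzR : z ∈ rotEnds G P := by
    by_cases hzv : z = v
    · exact hzv ▸ hv
    · obtain ⟨Q', hQQ', hQ'z⟩ := exists_elemRot_getLast?_eq hQv hwz hzv hvw.symm
      exact mem_rotEnds_of_getLast?_eq hpath (hPQ.tail hQQ') hQ'z
        (hQQ'.perm.length_eq ▸ hwz.length_le)
  exact hwR z hzR (adjAlong_of_reflTransGen_elemRot hpath hw hwR hPQ (.inl hwz))

theorem stmt_4 {V : Type*} [Fintype V] [DecidableEq V] (G : SimpleGraph V)
    (P : List V) (hne : P ≠ [])
    (hpath : IsPathList G P)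
    (hlongest : ∀ Q : List V, IsPathList G Q → Q.length ≤ P.length) :
    ∀ w : V, w ∉ rotEnds G P → (∃ v ∈ rotEnds G P, G.Adj v w) →
      w ∈ predAlong P (rotEnds G P) ∪ succAlong P (rotEnds G P) :=
  stmt_4_general G P hpath hlongest
end

section
/- Let h, k be positive integers and let G = (V,E) be a graph whose longest path has length exactly h and which contains no cycle of length h+1. If G is a (k,2)-expander, then there are at least (k+1)²/2 non-edges of G such that adding any one of them to G creates a cycle of length h+1. -/
open scoped Classical

/-- `G` is a `(k, α)`-expander (here with `α = 2`). -/
def IsTwoExpander {V : Type*} [Fintype V] [DecidableEq V]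
    (G : SimpleGraph V) (k : ℕ) : Prop :=
  ∀ U : Finset V, U.card ≤ k → 2 * U.card ≤ (extNbhd G U).card

/-!
Pósa rotations. Fix the end `a` of a longest path `a ⋯ x`; if `x` is adjacent to a vertex `y` of
the path, then `a ⋯ y y⁺ ⋯ x` can be replaced by the longest path `a ⋯ y x ⋯ y⁺`. Let `E` be the
set of ends reachable by repeated rotations. A neighbour `w ∉ E` of `E` lies on the path by
maximality, and it is a path-neighbour of some vertex of `E`: otherwise both of its path edges
survive every rotation, and rotating at `w` would make one of its path-neighbours an end. Hence
`|N(E)| ≤ 2|E| - 1`, and expansion forces `|E| > k`. Each `y ∈ E` ends a longest path from `a`;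
rotating it with `y` fixed yields more than `k` ends `z`, and as there is no `(h+1)`-cycle, each
`yz` is a non-edge that closes one. Every unordered pair arises at most twice.
-/

namespace SimpleGraph

def CreatesCycle {V : Type*} (G : SimpleGraph V) (n : ℕ) (e : Sym2 V) : Prop :=
  ¬ e.IsDiag ∧ e ∉ G.edgeSet ∧
    ∃ (u : V) (c : (G ⊔ fromEdgeSet {e}).Walk u u), c.IsCycle ∧ c.length = n

namespace Walk

variable {V : Type*} {G : SimpleGraph V} {a u v w x y : V}

lemma IsPath.ncard_neighborSet_toSubgraph_of_ne_end {p : G.Walk u v} (hp : p.IsPath)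
    (hw : w ∈ p.support) (hwv : w ≠ v) :
    (p.toSubgraph.neighborSet w).ncard = if w = u then 1 else 2 := by
  obtain ⟨i, rfl, hi⟩ := mem_support_iff_exists_getVert.mp hw
  have hil : i ≠ p.length := by rintro rfl; exact hwv p.getVert_length
  rcases Nat.eq_zero_or_pos i with rfl | hi0
  · rw [getVert_zero, if_pos rfl, hp.neighborSet_toSubgraph_startpoint
      (not_nil_of_ne (by simpa using hwv)), Set.ncard_singleton]
  · have hiu : p.getVert i ≠ u := fun h ↦ by
      have := hp.getVert_injOn (by simpa using hi) (by simp) (h.trans p.getVert_zero.symm)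
      omega
    rw [if_neg hiu, hp.ncard_neighborSet_toSubgraph_internal_eq_two hi0.ne' (by omega)]

lemma IsPath.ncard_neighborSet_toSubgraph_end_le_one {p : G.Walk u v} (hp : p.IsPath) :
    (p.toSubgraph.neighborSet v).ncard ≤ 1 := by
  by_cases hnil : p.Nil
  · rw [show p.toSubgraph.neighborSet v = ∅ from
      Set.eq_empty_of_forall_notMem fun z hz ↦ not_nil_of_adj_toSubgraph hz hnil,
      Set.ncard_empty]
    exact zero_le_one
  · rw [hp.neighborSet_toSubgraph_endpoint hnil, Set.ncard_singleton]

lemma IsPath.ncard_neighborSet_toSubgraph_le_two {p : G.Walk u v} (hp : p.IsPath) :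
    (p.toSubgraph.neighborSet w).ncard ≤ 2 := by
  by_cases hw : w ∈ p.support
  · by_cases hwv : w = v
    · exact hwv ▸ hp.ncard_neighborSet_toSubgraph_end_le_one.trans one_le_two
    · rw [hp.ncard_neighborSet_toSubgraph_of_ne_end hw hwv]
      split_ifs <;> norm_num
  · rw [show p.toSubgraph.neighborSet w = ∅ from
      Set.eq_empty_of_forall_notMem fun z hz ↦ hw (mem_support_of_adj_toSubgraph hz),
      Set.ncard_empty]
    exact zero_le_two

lemma IsPath.mk_notMem_edges {p : G.Walk u v} (hp : p.IsPath) (hlen : 2 ≤ p.length) :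
    s(u, v) ∉ p.edges := fun he ↦ by
  have hsnd := hp.snd_of_toSubgraph_adj (adj_toSubgraph_iff_mem_edges.mpr he)
  have := hp.getVert_injOn (by simp; omega) (by simp) (hsnd.trans p.getVert_length.symm)
  omega

lemma IsPath.createsCycle {p : G.Walk u v} (hp : p.IsPath) (hlen : 2 ≤ p.length)
    (hcycle : ∀ (w : V) (c : G.Walk w w), c.IsCycle → c.length ≠ p.length + 1) :
    G.CreatesCycle (p.length + 1) s(u, v) := by
  have huv : u ≠ v := by
    rintro rfl
    have := hp.getVert_injOn (by simp) (by simp) (p.getVert_zero.trans p.getVert_length.symm)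
    omega
  have hnotMem : s(v, u) ∉ p.edges := Sym2.eq_swap ▸ hp.mk_notMem_edges hlen
  have hnadj : ¬ G.Adj v u := fun hvu ↦
    hcycle _ _ (Path.cons_isCycle ⟨p, hp⟩ hvu hnotMem) (by simp)
  have hadj : (G ⊔ fromEdgeSet {s(u, v)}).Adj v u := Or.inr ⟨Sym2.eq_swap, huv.symm⟩
  refine ⟨by simpa using huv, fun he ↦ hnadj (G.mem_edgeSet.mp he).symm, v,
    .cons hadj (p.mapLe le_sup_left), ?_, by simp⟩
  rw [Walk.cons_isCycle_iff, Walk.edges_mapLe_eq_edges]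
  exact ⟨hp.mapLe _, hnotMem⟩

noncomputable def posaRotate (p : G.Walk a x) (hy : y ∈ p.support) (hxy : G.Adj x y) :
    G.Walk a (p.dropUntil y hy).snd :=
  (p.takeUntil y hy).append (cons hxy.symm (p.dropUntil y hy).tail.reverse)

lemma not_nil_dropUntil {p : G.Walk a x} (hy : y ∈ p.support) (hyx : y ≠ x) :
    ¬ (p.dropUntil y hy).Nil :=
  not_nil_of_ne hyx

lemma length_posaRotate (p : G.Walk a x) (hy : y ∈ p.support) (hxy : G.Adj x y) :
    (p.posaRotate hy hxy).length = p.length := by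
  have hsplit := congrArg length (p.take_spec hy)
  have htail := length_tail_add_one (not_nil_dropUntil hy hxy.ne')
  simp only [length_append] at hsplit
  simp only [posaRotate, length_append, length_cons, length_reverse]
  omega

lemma support_posaRotate_perm (p : G.Walk a x) (hy : y ∈ p.support) (hxy : G.Adj x y) :
    (p.posaRotate hy hxy).support.Perm p.support := by
  conv_rhs => rw [← p.take_spec hy]
  simp only [posaRotate, support_append, support_cons, support_reverse, List.tail_cons,
    support_tail_of_not_nil _ (not_nil_dropUntil hy hxy.ne')]
  exact (List.reverse_perm _).append_left _

lemma mem_edges_posaRotate {p : G.Walk a x} (hy : y ∈ p.support) (hxy : G.Adj x y) {e : Sym2 V}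
    (he : e ∈ p.edges) (hne : e ≠ s(y, (p.dropUntil y hy).snd)) :
    e ∈ (p.posaRotate hy hxy).edges := by
  rw [← p.take_spec hy, edges_append, ← cons_tail_eq _ (not_nil_dropUntil hy hxy.ne')] at he
  simp only [posaRotate, edges_append, edges_cons, edges_reverse, List.mem_append, List.mem_cons,
    List.mem_reverse] at he ⊢
  tauto

inductive PosaReachable (p₀ : G.Walk a x) : ∀ {v : V}, G.Walk a v → Prop
  | refl : PosaReachable p₀ p₀
  | rotate {z y : V} {p : G.Walk a z} (hp : PosaReachable p₀ p) (hy : y ∈ p.support)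
      (hzy : G.Adj z y) : PosaReachable p₀ (p.posaRotate hy hzy)

variable {p₀ : G.Walk a x}

lemma PosaReachable.length_eq {p : G.Walk a v} (hp : PosaReachable p₀ p) :
    p.length = p₀.length := by
  induction hp with
  | refl => rfl
  | rotate _ hy hzy ih => rw [length_posaRotate, ih]

lemma PosaReachable.support_perm {p : G.Walk a v} (hp : PosaReachable p₀ p) :
    p.support.Perm p₀.support := by
  induction hp with
  | refl => rfl
  | rotate _ hy hzy ih => exact (support_posaRotate_perm _ hy hzy).trans ih

lemma PosaReachable.isPath {p : G.Walk a v} (hp₀ : p₀.IsPath)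
    (hp : PosaReachable p₀ p) : p.IsPath :=
  isPath_def _ |>.mpr <| hp.support_perm.nodup_iff.mpr hp₀.support_nodup

section Ends

variable [Fintype V]

noncomputable def posaEnds (p₀ : G.Walk a x) : Finset V :=
  Finset.univ.filter fun v ↦ ∃ p : G.Walk a v, PosaReachable p₀ p

lemma mem_posaEnds : v ∈ posaEnds p₀ ↔ ∃ p : G.Walk a v, PosaReachable p₀ p := by
  simp [posaEnds]

lemma end_mem_posaEnds : x ∈ posaEnds p₀ := mem_posaEnds.mpr ⟨p₀, .refl⟩

lemma PosaReachable.end_mem_posaEnds {p : G.Walk a v} (hp : PosaReachable p₀ p) :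
    v ∈ posaEnds p₀ := mem_posaEnds.mpr ⟨p, hp⟩

lemma PosaReachable.mem_edges {p : G.Walk a v} (hp : PosaReachable p₀ p) {e : Sym2 V}
    (he : e ∈ p₀.edges) (hends : ∀ z ∈ e, z ∉ posaEnds p₀) : e ∈ p.edges := by
  induction hp with
  | refl => exact he
  | rotate hp hy hzy ih =>
    refine mem_edges_posaRotate hy hzy ih ?_
    rintro rfl
    exact hends _ (Sym2.mem_mk_right _ _) (hp.rotate hy hzy).end_mem_posaEnds

lemma IsPath.exists_toSubgraph_adj_mem_posaEnds (hp₀ : p₀.IsPath)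
    (hmax : ∀ (u v : V) (p : G.Walk u v), p.IsPath → p.length ≤ p₀.length)
    (hu : u ∈ posaEnds p₀) (hw : w ∉ posaEnds p₀) (huw : G.Adj u w) :
    ∃ v ∈ posaEnds p₀, p₀.toSubgraph.Adj v w := by
  obtain ⟨q, hq⟩ := mem_posaEnds.mp hu
  have hwq : w ∈ q.support := by
    by_contra hwq
    have := hmax _ _ _ ((hq.isPath hp₀).concat hwq huw)
    rw [length_concat, hq.length_eq] at this
    omega
  have hwu : w ≠ u := by rintro rfl; exact hw hu
  by_contra! hno
  have hsub : p₀.toSubgraph.neighborSet w ⊆ q.toSubgraph.neighborSet w := by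
    intro z hz
    refine adj_toSubgraph_iff_mem_edges.mpr (hq.mem_edges (adj_toSubgraph_iff_mem_edges.mp hz) ?_)
    intro t ht
    rcases Sym2.mem_iff.mp ht with rfl | rfl
    · exact hw
    · exact fun ht ↦ hno t ht hz.symm
  -- `w` is either the common start `a` of both paths or an inner vertex of both
  have hle : (q.toSubgraph.neighborSet w).ncard ≤ (p₀.toSubgraph.neighborSet w).ncard := by
    rw [(hq.isPath hp₀).ncard_neighborSet_toSubgraph_of_ne_end hwq hwu,
      hp₀.ncard_neighborSet_toSubgraph_of_ne_end (hq.support_perm.subset hwq)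
        (by rintro rfl; exact hw end_mem_posaEnds)]
  have heq := Set.eq_of_subset_of_ncard_le hsub hle q.finite_neighborSet_toSubgraph
  have hadj : q.toSubgraph.Adj w (q.dropUntil w hwq).snd :=
    adj_toSubgraph_iff_mem_edges.mpr <| q.edges_dropUntil_subset_edges hwq <|
      adj_toSubgraph_iff_mem_edges.mp <| toSubgraph_adj_snd _ (not_nil_dropUntil hwq hwu)
  have hadj₀ : p₀.toSubgraph.Adj w (q.dropUntil w hwq).snd := by
    rw [← Subgraph.mem_neighborSet, heq]; exact hadj
  exact hno _ (hq.rotate hwq huw).end_mem_posaEnds hadj₀.symm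

lemma IsPath.card_extNbhd_posaEnds_lt [DecidableEq V] (hp₀ : p₀.IsPath)
    (hmax : ∀ (u v : V) (p : G.Walk u v), p.IsPath → p.length ≤ p₀.length) :
    (extNbhd G (posaEnds p₀)).card < 2 * (posaEnds p₀).card := by
  set E := posaEnds p₀
  let nbrs : V → Finset V := fun v ↦ Finset.univ.filter (p₀.toSubgraph.Adj v)
  have hnbrs : ∀ v, (nbrs v).card = (p₀.toSubgraph.neighborSet v).ncard := fun v ↦ by
    rw [← Set.ncard_coe_finset]; congr; ext; simp [nbrs]
  have hsub : extNbhd G E ⊆ E.biUnion nbrs := by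
    intro w hw
    simp only [extNbhd, Finset.mem_filter, Finset.mem_univ, true_and] at hw
    obtain ⟨hwE, u, hu, huw⟩ := hw
    obtain ⟨v, hv, hvw⟩ := hp₀.exists_toSubgraph_adj_mem_posaEnds hmax hu hwE huw
    exact Finset.mem_biUnion.mpr ⟨v, hv, by simpa [nbrs] using hvw⟩
  have hx : x ∈ E := end_mem_posaEnds
  calc (extNbhd G E).card
      ≤ ∑ v ∈ E, (nbrs v).card := (Finset.card_le_card hsub).trans Finset.card_biUnion_le
    _ = (nbrs x).card + ∑ v ∈ E.erase x, (nbrs v).card := (Finset.add_sum_erase _ _ hx).symm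
    _ ≤ 1 + ∑ v ∈ E.erase x, 2 := by
        gcongr with v
        · rw [hnbrs]; exact hp₀.ncard_neighborSet_toSubgraph_end_le_one
        · rw [hnbrs]; exact hp₀.ncard_neighborSet_toSubgraph_le_two
    _ < 2 * E.card := by
        rw [Finset.sum_const, Finset.card_erase_of_mem hx, smul_eq_mul]
        have := Finset.card_pos.mpr ⟨x, hx⟩
        omega

lemma IsPath.lt_card_posaEnds [DecidableEq V] {k : ℕ} (hp₀ : p₀.IsPath)
    (hmax : ∀ (u v : V) (p : G.Walk u v), p.IsPath → p.length ≤ p₀.length)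
    (hexp : IsTwoExpander G k) : k < (posaEnds p₀).card := by
  by_contra! hk
  have := hexp _ hk
  have := hp₀.card_extNbhd_posaEnds_lt hmax
  omega

lemma IsPath.createsCycle_of_mem_posaEnds (hp₀ : p₀.IsPath) (hlen : 2 ≤ p₀.length)
    (hcycle : ∀ (w : V) (c : G.Walk w w), c.IsCycle → c.length ≠ p₀.length + 1)
    (hv : v ∈ posaEnds p₀) : G.CreatesCycle (p₀.length + 1) s(a, v) := by
  obtain ⟨p, hp⟩ := mem_posaEnds.mp hv
  rw [← hp.length_eq] at hlen hcycle ⊢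
  exact (hp.isPath hp₀).createsCycle hlen hcycle

lemma IsPath.exists_createsCycle_of_mem_posaEnds [DecidableEq V] {k : ℕ} (hp₀ : p₀.IsPath)
    (hlen : 2 ≤ p₀.length)
    (hmax : ∀ (u v : V) (p : G.Walk u v), p.IsPath → p.length ≤ p₀.length)
    (hcycle : ∀ (w : V) (c : G.Walk w w), c.IsCycle → c.length ≠ p₀.length + 1)
    (hexp : IsTwoExpander G k) (hv : v ∈ posaEnds p₀) :
    ∃ F : Finset V, k < F.card ∧ ∀ z ∈ F, G.CreatesCycle (p₀.length + 1) s(v, z) := by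
  obtain ⟨p, hp⟩ := mem_posaEnds.mp hv
  have hrev : p.reverse.IsPath := (hp.isPath hp₀).reverse
  have hlen' : p.reverse.length = p₀.length := by rw [length_reverse, hp.length_eq]
  rw [← hlen'] at hlen hmax hcycle ⊢
  exact ⟨posaEnds p.reverse, hrev.lt_card_posaEnds hmax hexp,
    fun z hz ↦ hrev.createsCycle_of_mem_posaEnds hlen hcycle hz⟩

end Ends

end Walk

end SimpleGraph

lemma two_le_of_isTwoExpander {V : Type*} [Fintype V] [DecidableEq V] {G : SimpleGraph V}
    {h k : ℕ} (v : V) (hk : 0 < k) (hexp : IsTwoExpander G k)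
    (hmax : ∀ (u w : V) (p : G.Walk u w), p.IsPath → p.length ≤ h) : 2 ≤ h := by
  have hv := hexp {v} (by rw [Finset.card_singleton]; exact hk)
  rw [Finset.card_singleton] at hv
  obtain ⟨a, ha, b, hb, hab⟩ := Finset.one_lt_card.mp (by omega : 1 < (extNbhd G {v}).card)
  simp only [extNbhd, Finset.mem_filter, Finset.mem_univ, true_and, Finset.mem_singleton,
    exists_eq_left] at ha hb
  have hp : (SimpleGraph.Walk.cons ha.2.symm (.cons hb.2 .nil)).IsPath := by
    simp [SimpleGraph.Walk.cons_isPath_iff, hab, ha.1, Ne.symm hb.1]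
  simpa using hmax _ _ _ hp

lemma Finset.card_le_two_mul_card_image_sym2 {α : Type*} [DecidableEq α] (t : Finset (α × α)) :
    t.card ≤ 2 * (t.image fun q ↦ s(q.1, q.2)).card := by
  refine Finset.card_le_mul_card_image t 2 fun e he ↦ ?_
  obtain ⟨⟨a, b⟩, -, rfl⟩ := Finset.mem_image.mp he
  refine (Finset.card_le_card (t := {(a, b), (b, a)}) fun q hq ↦ ?_).trans Finset.card_le_two
  rcases Sym2.eq_iff.mp (Finset.mem_filter.mp hq).2 with ⟨rfl, rfl⟩ | ⟨rfl, rfl⟩ <;> simp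

lemma Finset.sq_succ_le_two_mul_card_filter_sym2 {α : Type*} [Fintype α] [DecidableEq α]
    {P : Sym2 α → Prop} {k : ℕ} (E : Finset α) (hE : k < E.card)
    (hF : ∀ v ∈ E, ∃ F : Finset α, k < F.card ∧ ∀ z ∈ F, P s(v, z)) :
    (k + 1) ^ 2 ≤ 2 * (Finset.univ.filter P).card := by
  choose! F hFcard hFP using hF
  let pairs : Finset (α × α) := (E.sigma F).map (Equiv.sigmaEquivProd α α).toEmbedding
  have hpairs : (k + 1) ^ 2 ≤ pairs.card := by
    rw [Finset.card_map, Finset.card_sigma, sq]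
    calc (k + 1) * (k + 1) ≤ E.card * (k + 1) := Nat.mul_le_mul_right _ hE
      _ ≤ ∑ v ∈ E, (F v).card := by
          rw [← smul_eq_mul]; exact Finset.card_nsmul_le_sum _ _ _ hFcard
  have himage : (pairs.image fun q ↦ s(q.1, q.2)) ⊆ Finset.univ.filter P := by
    intro e he
    simp only [pairs, Finset.mem_image, Finset.mem_map, Finset.mem_sigma] at he
    obtain ⟨_, ⟨⟨v, z⟩, ⟨hv, hz⟩, rfl⟩, rfl⟩ := he
    exact Finset.mem_filter.mpr ⟨Finset.mem_univ _, hFP v hv z hz⟩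
  calc (k + 1) ^ 2 ≤ pairs.card := hpairs
    _ ≤ 2 * (pairs.image fun q ↦ s(q.1, q.2)).card := pairs.card_le_two_mul_card_image_sym2
    _ ≤ 2 * (Finset.univ.filter P).card := Nat.mul_le_mul_left _ (Finset.card_le_card himage)

theorem stmt_5_general {V : Type*} [Fintype V] [DecidableEq V] (G : SimpleGraph V)
    (h k : ℕ) (hk : 0 < k)
    (hlong : ∃ (u v : V) (p : G.Walk u v), p.IsPath ∧ p.length = h)
    (hmax : ∀ (u v : V) (p : G.Walk u v), p.IsPath → p.length ≤ h)
    (hnocycle : ∀ (u : V) (c : G.Walk u u), c.IsCycle → c.length ≠ h + 1)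
    (hexp : IsTwoExpander G k) :
    ∃ B : Finset (Sym2 V),
      (∀ e ∈ B, ¬ e.IsDiag ∧ e ∉ G.edgeSet ∧
        ∃ (u : V) (c : (G ⊔ SimpleGraph.fromEdgeSet {e}).Walk u u),
          c.IsCycle ∧ c.length = h + 1) ∧
      (k + 1) ^ 2 ≤ 2 * B.card := by
  obtain ⟨a, b, p₀, hp₀, rfl⟩ := hlong
  have hlen := two_le_of_isTwoExpander a hk hexp hmax
  exact ⟨Finset.univ.filter (G.CreatesCycle (p₀.length + 1)),
    fun e he ↦ (Finset.mem_filter.mp he).2,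
    Finset.sq_succ_le_two_mul_card_filter_sym2 p₀.posaEnds (hp₀.lt_card_posaEnds hmax hexp)
      fun v hv ↦ hp₀.exists_createsCycle_of_mem_posaEnds hlen hmax hnocycle hexp hv⟩

theorem stmt_5 {V : Type*} [Fintype V] [DecidableEq V] (G : SimpleGraph V)
    (h k : ℕ) (hh : 0 < h) (hk : 0 < k)
    (hlong : ∃ (u v : V) (p : G.Walk u v), p.IsPath ∧ p.length = h)
    (hmax : ∀ (u v : V) (p : G.Walk u v), p.IsPath → p.length ≤ h)
    (hnocycle : ∀ (u : V) (c : G.Walk u u), c.IsCycle → c.length ≠ h + 1)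
    (hexp : IsTwoExpander G k) :
    ∃ B : Finset (Sym2 V),
      (∀ e ∈ B, ¬ e.IsDiag ∧ e ∉ G.edgeSet ∧
        ∃ (u : V) (c : (G ⊔ SimpleGraph.fromEdgeSet {e}).Walk u u),
          c.IsCycle ∧ c.length = h + 1) ∧
      (k + 1) ^ 2 ≤ 2 * B.card :=
  stmt_5_general G h k hk hlong hmax hnocycle hexp
end

section
/- For every ε > 0 there exists C = C(ε) > 0 such that if p = C/n, then with high probability the random graph G ~ G(n,p) contains a path of length at least (1−ε)n. -/
/-!
If every two disjoint `k`-sets of vertices are joined by an edge, depth-first search finds a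
path with more than `n - 2k` vertices: run it until the set `T` of finished vertices is as large
as the set `U` of unvisited ones; there is no `T`–`U` edge, so `|T| = |U| < k`, and all other
vertices lie on the stack, which is a path. In `G(n, C/n)` the expected number of pairs of
disjoint `k`-sets with no edge between them is at most `4^n (1 - C/n)^(k^2) ≤ (4e^{-4})^n`
once `k ≥ εn/4` and `C = 64/ε^2`, so with high probability there is none.
-/

open Filter
open scoped Classical

/-- The probability, in the Erdős–Rényi binomial random graph `G(n,p)`,
of the event `P` (each of the `n.choose 2` pairs is an edge independently
with probability `p`). -/
noncomputable def erProb (n : ℕ) (p : ℝ) (P : SimpleGraph (Fin n) → Prop) : ℝ :=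
  ∑ G : SimpleGraph (Fin n),
    if P G then
      p ^ Nat.card G.edgeSet * (1 - p) ^ (n.choose 2 - Nat.card G.edgeSet)
    else 0

open Finset

theorem SimpleGraph.sum_edgeFinset_eq_sum_powerset {V : Type*} [Fintype V] [DecidableEq V]
    {M : Type*} [AddCommMonoid M] (f : Finset (Sym2 V) → M) :
    ∑ G : SimpleGraph V, f G.edgeFinset =
      ∑ s ∈ ({e | ¬ e.IsDiag} : Finset (Sym2 V)).powerset, f s := by
  refine sum_nbij' (fun G => G.edgeFinset) (fun s => SimpleGraph.fromEdgeSet s)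
    (fun G _ => ?_) (fun _ _ => mem_univ _) (fun G _ => by simp) (fun s hs => ?_) (fun _ _ => rfl)
  · refine mem_powerset.mpr fun e he => ?_
    simpa using G.not_isDiag_of_mem_edgeSet (by simpa using he)
  · ext e
    have hdiag : e ∈ s → ¬ e.IsDiag := fun he => by simpa using mem_powerset.mp hs he
    simp only [SimpleGraph.mem_edgeFinset, SimpleGraph.edgeSet_fromEdgeSet, Set.mem_sdiff, mem_coe]
    tauto

namespace SimpleGraph

variable {V : Type*} [DecidableEq V] (G : SimpleGraph V)

/-- A state of depth-first search: `stack` is the current path, read from its top, and the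
vertices of `done` have been fully explored, so none of them has an unvisited neighbour. -/
structure DFSState where
  stack : List V
  done : Finset V
  nodup : stack.Nodup
  isChain : stack.IsChain G.Adj
  disjoint : Disjoint stack.toFinset done
  not_adj : ∀ w ∈ done, ∀ u ∉ stack.toFinset ∪ done, ¬ G.Adj w u

namespace DFSState

def init : G.DFSState where
  stack := []
  done := ∅
  nodup := List.nodup_nil
  isChain := List.isChain_nil
  disjoint := by simp
  not_adj := by simp

variable {G} [Fintype V]

def unvisited (s : G.DFSState) : Finset V := (s.stack.toFinset ∪ s.done)ᶜ

def push (s : G.DFSState) (x : V) (hx : x ∈ s.unvisited)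
    (hadj : ∀ y ∈ s.stack.head?, G.Adj x y) : G.DFSState where
  stack := x :: s.stack
  done := s.done
  nodup := by
    simp only [unvisited, mem_compl, mem_union, List.mem_toFinset, not_or] at hx
    exact List.nodup_cons.mpr ⟨hx.1, s.nodup⟩
  isChain := List.isChain_cons.mpr ⟨hadj, s.isChain⟩
  disjoint := by
    simp only [unvisited, mem_compl, mem_union, not_or] at hx
    simpa [List.toFinset_cons, hx.2] using s.disjoint
  not_adj w hw u hu := s.not_adj w hw u (by simp_all)

def pop (s : G.DFSState) {v : V} {rest : List V} (hs : s.stack = v :: rest)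
    (hv : ∀ u ∈ s.unvisited, ¬ G.Adj v u) : G.DFSState where
  stack := rest
  done := insert v s.done
  nodup := (List.nodup_cons.mp (hs ▸ s.nodup)).2
  isChain := (hs ▸ s.isChain).tail
  disjoint := by
    have := s.disjoint
    have hnd := s.nodup
    rw [hs] at this hnd
    simp_all [List.toFinset_cons, disjoint_insert_right]
  not_adj w hw u hu := by
    have hu' : u ∈ s.unvisited := by simp_all [unvisited]
    rcases mem_insert.mp hw with rfl | hw
    · exact hv u hu'
    · exact s.not_adj w hw u (by simpa [unvisited] using hu')

lemma unvisited_push (s : G.DFSState) {x : V} (hx hadj) :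
    (s.push x hx hadj).unvisited = s.unvisited.erase x := by
  simp [unvisited, push, List.toFinset_cons, compl_insert]

lemma unvisited_pop (s : G.DFSState) {v : V} {rest : List V} (hs hv) :
    (s.pop (v := v) (rest := rest) hs hv).unvisited = s.unvisited := by
  simp [unvisited, pop, hs, List.toFinset_cons]

lemma card_done_pop (s : G.DFSState) {v : V} {rest : List V} (hs hv) :
    #(s.pop (v := v) (rest := rest) hs hv).done = #s.done + 1 :=
  card_insert_of_notMem <| Finset.disjoint_left.mp s.disjoint (by simp [hs])

lemma card_unvisited_add_length_add_card_done (s : G.DFSState) :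
    #s.unvisited + s.stack.length + #s.done = Fintype.card V := by
  have := card_le_univ (s.stack.toFinset ∪ s.done)
  rw [card_union_of_disjoint s.disjoint, List.toFinset_card_of_nodup s.nodup] at this
  rw [unvisited, card_compl, card_union_of_disjoint s.disjoint,
    List.toFinset_card_of_nodup s.nodup]
  omega

theorem exists_card_done_eq_card_unvisited (s : G.DFSState) (h : #s.done ≤ #s.unvisited) :
    ∃ t : G.DFSState, #t.done = #t.unvisited := by
  rcases h.eq_or_lt with h | h
  · exact ⟨s, h⟩
  by_cases hpush : ∃ x ∈ s.unvisited, ∀ y ∈ s.stack.head?, G.Adj x y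
  · obtain ⟨x, hx, hadj⟩ := hpush
    exact (s.push x hx hadj).exists_card_done_eq_card_unvisited
      (by rw [unvisited_push, card_erase_of_mem hx]; exact Nat.le_sub_one_of_lt h)
  push Not at hpush
  obtain ⟨x, hx⟩ : s.unvisited.Nonempty := card_pos.mp (by omega)
  match hs : s.stack with
  | [] => simp [hs] at hpush; exact absurd hx (hpush x)
  | v :: rest =>
    have hv : ∀ u ∈ s.unvisited, ¬ G.Adj v u := fun u hu hvu => by
      simpa [hs, hvu.symm] using hpush u hu
    exact (s.pop hs hv).exists_card_done_eq_card_unvisited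
      (by rw [unvisited_pop, card_done_pop]; exact h)
termination_by 2 * #s.unvisited + s.stack.length
decreasing_by
  · rw [unvisited_push, card_erase_of_mem hx]; simp only [push, List.length_cons]; omega
  · rw [unvisited_pop]; simp only [pop, hs, List.length_cons]; omega

end DFSState

variable [Fintype V]

theorem exists_isPath_length_of_forall_exists_adj (k : ℕ) (hk : 2 * k ≤ Fintype.card V)
    (h : ∀ A B : Finset V, Disjoint A B → #A = k → #B = k → ∃ a ∈ A, ∃ b ∈ B, G.Adj a b) :
    ∃ (u v : V) (w : G.Walk u v), w.IsPath ∧ Fintype.card V < w.length + 2 * k := by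
  obtain ⟨s, hs⟩ := (DFSState.init G).exists_card_done_eq_card_unvisited (by simp [DFSState.init])
  have hdone : #s.done < k := by
    by_contra! hk
    obtain ⟨A, hA, hAk⟩ := exists_subset_card_eq (hs ▸ hk)
    obtain ⟨B, hB, hBk⟩ := exists_subset_card_eq hk
    have hAB : Disjoint A B := by
      refine Finset.disjoint_of_subset_left hA (Finset.disjoint_of_subset_right hB ?_)
      exact disjoint_compl_left.mono_right subset_union_right
    obtain ⟨a, ha, b, hb, hab⟩ := h A B hAB hAk hBk
    exact s.not_adj b (hB hb) a (by simpa [DFSState.unvisited] using hA ha) hab.symm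
  have hcard := s.card_unvisited_add_length_add_card_done
  have hne : s.stack ≠ [] := by
    rintro hnil
    simp only [hnil, List.length_nil] at hcard
    omega
  refine ⟨_, _, Walk.ofSupport s.stack hne s.isChain, .mk' ?_, ?_⟩
  · simpa using s.nodup
  · rw [Walk.length_ofSupport]
    omega

end SimpleGraph

section erProb

variable {n : ℕ} {p : ℝ}

lemma erProb_summand_nonneg (hp0 : 0 ≤ p) (hp1 : p ≤ 1) (P : SimpleGraph (Fin n) → Prop)
    (G : SimpleGraph (Fin n)) :
    0 ≤ if P G then p ^ Nat.card G.edgeSet * (1 - p) ^ (n.choose 2 - Nat.card G.edgeSet)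
      else 0 := by
  have := sub_nonneg.mpr hp1
  split_ifs <;> positivity

lemma erProb_nonneg (hp0 : 0 ≤ p) (hp1 : p ≤ 1) (P : SimpleGraph (Fin n) → Prop) :
    0 ≤ erProb n p P :=
  sum_nonneg fun G _ => erProb_summand_nonneg hp0 hp1 P G

lemma erProb_mono (hp0 : 0 ≤ p) (hp1 : p ≤ 1) {P Q : SimpleGraph (Fin n) → Prop}
    (h : ∀ G, P G → Q G) : erProb n p P ≤ erProb n p Q := by
  refine sum_le_sum fun G _ => ?_
  by_cases hP : P G
  · simp [hP, h G hP]
  · simpa [hP] using erProb_summand_nonneg hp0 hp1 Q G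

lemma erProb_exists_le_sum (hp0 : 0 ≤ p) (hp1 : p ≤ 1) {ι : Type*} (I : Finset ι)
    (Q : ι → SimpleGraph (Fin n) → Prop) :
    erProb n p (fun G => ∃ i ∈ I, Q i G) ≤ ∑ i ∈ I, erProb n p (Q i) := by
  unfold erProb
  rw [sum_comm]
  refine sum_le_sum fun G _ => ?_
  split_ifs with hQ
  · obtain ⟨i, hi, hQi⟩ := hQ
    refine le_of_eq_of_le ?_ (single_le_sum (fun j _ => erProb_summand_nonneg hp0 hp1 (Q j) G) hi)
    simp [hQi]
  · exact sum_nonneg fun i _ => erProb_summand_nonneg hp0 hp1 (Q i) G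

lemma erProb_disjoint_edgeFinset (F : Finset (Sym2 (Fin n))) (hF : ∀ e ∈ F, ¬ e.IsDiag) :
    erProb n p (fun G => Disjoint G.edgeFinset F) = (1 - p) ^ #F := by
  set pairs : Finset (Sym2 (Fin n)) := {e | ¬ e.IsDiag}
  have hpairs : #pairs = n.choose 2 := by
    rw [← Fintype.card_subtype, Sym2.card_subtype_not_diag, Fintype.card_fin]
  have hFpairs : F ⊆ pairs := fun e he => by simpa [pairs] using hF e he
  have hcard : #F + #(pairs \ F) = n.choose 2 := by
    rw [card_sdiff_of_subset hFpairs, ← hpairs]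
    exact Nat.add_sub_of_le (card_le_card hFpairs)
  calc erProb n p (fun G => Disjoint G.edgeFinset F)
      = ∑ s ∈ pairs.powerset,
          if Disjoint s F then p ^ #s * (1 - p) ^ (n.choose 2 - #s) else 0 := by
        rw [← SimpleGraph.sum_edgeFinset_eq_sum_powerset]
        simp only [erProb, Nat.card_eq_fintype_card, SimpleGraph.edgeFinset_card]
    _ = ∑ s ∈ (pairs \ F).powerset, p ^ #s * (1 - p) ^ (#(pairs \ F) - #s) * (1 - p) ^ #F := by
        rw [← sum_filter]
        refine sum_congr (by ext s; simp [subset_sdiff]) fun s hs => ?_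
        have := card_le_card (mem_powerset.mp hs)
        rw [mul_assoc, ← pow_add]
        congr 2
        omega
    _ = (1 - p) ^ #F := by
        rw [← sum_mul, sum_pow_mul_eq_add_pow, add_sub_cancel, one_pow, one_mul]

lemma erProb_add_erProb_not (P : SimpleGraph (Fin n) → Prop) :
    erProb n p P + erProb n p (fun G => ¬ P G) = 1 := by
  have h := erProb_disjoint_edgeFinset (n := n) (p := p) ∅ (by simp)
  simp only [disjoint_empty_right, card_empty, pow_zero] at h
  rw [← h, erProb, erProb, erProb, ← sum_add_distrib]
  exact sum_congr rfl fun G _ => by split_ifs <;> simp_all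

lemma erProb_forall_not_adj (A B : Finset (Fin n)) (hAB : Disjoint A B) :
    erProb n p (fun G => ∀ a ∈ A, ∀ b ∈ B, ¬ G.Adj a b) = (1 - p) ^ (#A * #B) := by
  have hne : ∀ a ∈ A, ∀ b ∈ B, a ≠ b := fun a ha b hb hab =>
    disjoint_left.mp hAB ha (hab ▸ hb)
  set F : Finset (Sym2 (Fin n)) := (A ×ˢ B).image fun ab => s(ab.1, ab.2)
  have hF : #F = #A * #B := by
    rw [card_image_of_injOn, card_product]
    rintro ⟨a, b⟩ hab ⟨c, d⟩ hcd h
    simp only [coe_product, Set.mem_prod, mem_coe] at hab hcd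
    rcases Sym2.mk_eq_mk_iff.mp h with h | h
    · exact h
    · exact absurd (congrArg Prod.fst h) (hne a hab.1 d hcd.2)
  rw [← hF, ← erProb_disjoint_edgeFinset F]
  · congr 1
    ext G
    simp only [F, disjoint_right, mem_image, mem_product, SimpleGraph.mem_edgeFinset]
    constructor
    · rintro hG _ ⟨⟨a, b⟩, ⟨ha, hb⟩, rfl⟩
      exact hG a ha b hb
    · exact fun hG a ha b hb => hG ⟨(a, b), ⟨ha, hb⟩, rfl⟩
  · simp only [F, mem_image, mem_product]
    rintro _ ⟨⟨a, b⟩, ⟨ha, hb⟩, rfl⟩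
    exact Sym2.mk_isDiag_iff.not.mpr (hne a ha b hb)

lemma erProb_exists_forall_not_adj_le (hp0 : 0 ≤ p) (hp1 : p ≤ 1) (k : ℕ) :
    erProb n p (fun G => ∃ A B : Finset (Fin n), Disjoint A B ∧ #A = k ∧ #B = k ∧
      ∀ a ∈ A, ∀ b ∈ B, ¬ G.Adj a b) ≤ 4 ^ n * (1 - p) ^ (k * k) := by
  set I : Finset (Finset (Fin n) × Finset (Fin n)) :=
    {AB | Disjoint AB.1 AB.2 ∧ #AB.1 = k ∧ #AB.2 = k}
  calc _ ≤ erProb n p (fun G => ∃ AB ∈ I, ∀ a ∈ AB.1, ∀ b ∈ AB.2, ¬ G.Adj a b) :=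
        erProb_mono hp0 hp1 fun G ⟨A, B, hAB, hA, hB, hG⟩ => ⟨(A, B), by simp [I, hAB, hA, hB], hG⟩
    _ ≤ ∑ AB ∈ I, erProb n p (fun G => ∀ a ∈ AB.1, ∀ b ∈ AB.2, ¬ G.Adj a b) :=
        erProb_exists_le_sum hp0 hp1 I _
    _ = ∑ AB ∈ I, (1 - p) ^ (k * k) := by
        refine sum_congr rfl fun AB hAB => ?_
        simp only [I, mem_filter, mem_univ, true_and] at hAB
        rw [erProb_forall_not_adj _ _ hAB.1, hAB.2.1, hAB.2.2]
    _ ≤ 4 ^ n * (1 - p) ^ (k * k) := by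
        rw [sum_const, nsmul_eq_mul]
        gcongr
        calc (#I : ℝ) ≤ Fintype.card (Finset (Fin n) × Finset (Fin n)) := by
              exact_mod_cast card_le_univ I
          _ = 4 ^ n := by simp [← mul_pow]

end erProb

def HasLongPath (ε : ℝ) {n : ℕ} (G : SimpleGraph (Fin n)) : Prop :=
  ∃ (u v : Fin n) (w : G.Walk u v), w.IsPath ∧ (1 - ε) * n ≤ (w.length : ℝ)

lemma erProb_not_hasLongPath_le {n : ℕ} {p ε : ℝ} (hp0 : 0 ≤ p) (hp1 : p ≤ 1) {k : ℕ}
    (hkn : 2 * k ≤ n) (hkε : 2 * k ≤ ε * n) :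
    erProb n p (fun G => ¬ HasLongPath ε G) ≤ 4 ^ n * (1 - p) ^ (k * k) := by
  refine (erProb_mono hp0 hp1 fun G hG => ?_).trans (erProb_exists_forall_not_adj_le hp0 hp1 k)
  by_contra! h
  obtain ⟨u, v, w, hw, hlen⟩ :=
    G.exists_isPath_length_of_forall_exists_adj k (by simpa using hkn) h
  refine hG ⟨u, v, w, hw, ?_⟩
  have : (n : ℝ) + 1 ≤ w.length + 2 * k := by exact_mod_cast (by simpa using hlen)
  linarith

lemma four_pow_mul_one_sub_pow_le {n k : ℕ} {p : ℝ} (hp1 : p ≤ 1) (h : 4 * n ≤ p * k ^ 2) :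
    4 ^ n * (1 - p) ^ (k * k) ≤ (4 * Real.exp (-4)) ^ n := by
  have hexp : (1 - p) ^ (k * k) ≤ Real.exp (-4) ^ n :=
    calc (1 - p) ^ (k * k) ≤ Real.exp (-p) ^ (k * k) := by
          gcongr
          linarith [Real.add_one_le_exp (-p)]
      _ = Real.exp (-(p * k ^ 2)) := by rw [← Real.exp_nat_mul]; push_cast; ring_nf
      _ ≤ Real.exp (-4 * n) := by gcongr; linarith
      _ = Real.exp (-4) ^ n := by rw [← Real.exp_nat_mul]; ring_nf
  rw [mul_pow]
  gcongr

lemma eventually_erProb_not_hasLongPath_le {ε δ : ℝ} (hδ : 0 < δ) (hδ1 : δ ≤ 1) (hδε : δ ≤ ε) :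
    ∀ᶠ n : ℕ in atTop, erProb n (64 / δ ^ 2 / n) (fun G => ¬ HasLongPath ε G) ≤
      (4 * Real.exp (-4)) ^ n := by
  filter_upwards [eventually_ge_atTop ⌈64 / δ ^ 2⌉₊, eventually_ge_atTop ⌈4 / δ⌉₊] with n hCn hδn
  rw [Nat.ceil_le] at hCn hδn
  have hn : (0 : ℝ) < n := lt_of_lt_of_le (by positivity) hδn
  have hδn' : 4 ≤ δ * n := by rwa [div_le_iff₀' hδ] at hδn
  set k := ⌊δ * n / 2⌋₊
  have hk_le : 2 * (k : ℝ) ≤ δ * n := by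
    linarith [Nat.floor_le (by positivity : 0 ≤ δ * n / 2)]
  have hk_ge : δ * n / 4 ≤ k := by
    linarith [Nat.lt_floor_add_one (δ * n / 2)]
  have hp1 : 64 / δ ^ 2 / n ≤ 1 := (div_le_one hn).mpr hCn
  refine (erProb_not_hasLongPath_le (by positivity) hp1 (k := k) ?_ ?_).trans
    (four_pow_mul_one_sub_pow_le hp1 ?_)
  · exact_mod_cast (show 2 * (k : ℝ) ≤ n by nlinarith)
  · nlinarith
  · calc 4 * (n : ℝ) = 64 / δ ^ 2 / n * (δ * n / 4) ^ 2 := by field_simp; ring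
      _ ≤ 64 / δ ^ 2 / n * k ^ 2 := by gcongr

lemma tendsto_erProb_not_hasLongPath {ε δ : ℝ} (hδ : 0 < δ) (hδ1 : δ ≤ 1) (hδε : δ ≤ ε) :
    Tendsto (fun n : ℕ => erProb n (64 / δ ^ 2 / n) (fun G => ¬ HasLongPath ε G)) atTop
      (nhds 0) := by
  have hr : 4 * Real.exp (-4) < 1 := by
    rw [Real.exp_neg, ← div_eq_mul_inv, div_lt_one (Real.exp_pos 4)]
    linarith [Real.add_one_lt_exp (by norm_num : (4 : ℝ) ≠ 0)]
  refine squeeze_zero' ?_ (eventually_erProb_not_hasLongPath_le hδ hδ1 hδε)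
    (tendsto_pow_atTop_nhds_zero_of_lt_one (by positivity) hr)
  filter_upwards [eventually_ge_atTop ⌈64 / δ ^ 2⌉₊, eventually_gt_atTop 0] with n hCn hn
  rw [Nat.ceil_le] at hCn
  exact erProb_nonneg (by positivity) ((div_le_one (by positivity)).mpr hCn) _

theorem stmt_13 :
    ∀ ε : ℝ, 0 < ε → ∃ C : ℝ, 0 < C ∧
      Tendsto
        (fun n : ℕ => erProb n (C / n)
          (fun G => ∃ (u v : Fin n) (p : G.Walk u v), p.IsPath ∧
            (1 - ε) * n ≤ (p.length : ℝ)))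
        atTop (nhds 1) := by
  intro ε hε
  set δ := min ε 1
  have hδ : 0 < δ := lt_min hε one_pos
  refine ⟨64 / δ ^ 2, by positivity, ?_⟩
  have h := (tendsto_erProb_not_hasLongPath hδ (min_le_right ε 1) (min_le_left ε 1)).const_sub 1
  rw [sub_zero] at h
  exact h.congr fun n => (eq_sub_of_add_eq (erProb_add_erProb_not _)).symm
end

section
/- Let p = (1+ε)/n for a small constant ε > 0 and let N₀ = εn²/2. Consider a DFS execution on an n-vertex graph, and at time N₀ let S be the set of processed vertices, U the DFS stack and T = [n]∖(S∪U) the set of unvisited vertices. If |S| < n/3, |S ∪ U| ≥ ε(1+ε)n/2 − n^{2/3}, and all pairs between S and T have been queried (with at most N₀ queries in total), then |U| > ε²n/5. -/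
set_option maxHeartbeats 1000000 in
/-- The deterministic counting step in the DFS proof that `G(n,(1+ε)/n)` whp contains
a path on at least `ε²n/5` vertices: if, after `N₀ = εn²/2` queries, the processed set `S`
has size `s < n/3`, the number of discovered vertices satisfies
`s + u ≥ ε(1+ε)n/2 − n^{2/3}`, and all `s · (n − s − u)` pairs between `S` and the unvisited
set have been queried (negatively) among the at most `εn²/2` queries, then the DFS stack `U`
has size `u > ε²n/5`. -/
theorem stmt_15 :
    ∃ ε₀ : ℝ, 0 < ε₀ ∧ ∀ ε : ℝ, 0 < ε → ε < ε₀ →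
      ∃ n₀ : ℕ, ∀ n : ℕ, n₀ ≤ n → ∀ s u : ℝ, 0 ≤ s → 0 ≤ u →
        s < (n : ℝ) / 3 →
        ε * (1 + ε) * n / 2 - (n : ℝ) ^ ((2 : ℝ) / 3) ≤ s + u →
        s * ((n : ℝ) - s - u) ≤ ε * (n : ℝ) ^ 2 / 2 →
        ε ^ 2 * n / 5 < u := by
  refine ⟨1/10, by norm_num, fun ε hε hε' => ?_⟩
  refine ⟨max 1 ⌈(100/ε^3)^3⌉₊, fun n hn s u hs hu hs3 hsu hq => ?_⟩
  have hn1' : 1 ≤ n := le_trans (le_max_left _ _) hn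
  have hn1 : (1:ℝ) ≤ n := by exact_mod_cast hn1'
  have hn0 : (0:ℝ) < n := by linarith
  set D := (n:ℝ) ^ ((2:ℝ)/3) with hDdef
  have hD0 : 0 ≤ D := Real.rpow_nonneg (Nat.cast_nonneg n) _
  have hK : (0:ℝ) < 100/ε^3 := by positivity
  have hnK : ((100/ε^3)^3 : ℝ) ≤ (n:ℝ) := by
    calc ((100/ε^3)^3 : ℝ) ≤ (⌈(100/ε^3)^3⌉₊ : ℝ) := Nat.le_ceil _
    _ ≤ n := by exact_mod_cast le_trans (le_max_right _ _) hn
  have h13 : (100/ε^3) ≤ (n:ℝ) ^ ((1:ℝ)/3) := by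
    have h := Real.rpow_le_rpow (by positivity) hnK (by norm_num : (0:ℝ) ≤ 1/3)
    rwa [← Real.rpow_natCast (100/ε^3) 3, ← Real.rpow_mul hK.le, show ((3:ℕ):ℝ) * (1/3) = 1 by norm_num, Real.rpow_one] at h
  have hmul : D * (n:ℝ) ^ ((1:ℝ)/3) = n := by
    rw [hDdef, ← Real.rpow_add hn0]
    norm_num
  have hDK : D * (100/ε^3) ≤ (n:ℝ) := by
    calc D * (100/ε^3) ≤ D * (n:ℝ)^((1:ℝ)/3) := by
          exact mul_le_mul_of_nonneg_left h13 hD0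
    _ = n := hmul
  have hD : D ≤ ε^3 * n / 100 := by
    have h3 := mul_le_mul_of_nonneg_right hDK (pow_pos hε 3).le
    have hε3 : ε^3 ≠ 0 := by positivity
    rw [mul_assoc, div_mul_cancel₀ _ hε3] at h3
    linarith
  have hDn : D ≤ n := by
    have := Real.rpow_le_rpow_of_exponent_le hn1 (show (2:ℝ)/3 ≤ 1 by norm_num)
    rwa [Real.rpow_one] at this
  by_contra hcon
  push_neg at hcon
  -- abbreviations
  have hsA : 0 ≤ s - (ε*(1+ε)*n/2 - D - ε^2*n/5) := by linarith
  have hεn : ε * n ≤ n/10 := by nlinarith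
  have hε2n : ε^2 * n ≤ n/100 := by nlinarith
  have hMsA : 0 ≤ (n - ε^2*n/5) - s - (ε*(1+ε)*n/2 - D - ε^2*n/5) := by nlinarith
  have key := mul_nonneg hsA hMsA
  have hsEu := mul_nonneg hs (by linarith : 0 ≤ ε^2*n/5 - u)
  have hDn2 : D * n ≤ ε^3 * n^2 / 100 := by
    have := mul_le_mul_of_nonneg_right hD hn0.le
    linarith [this]
  have hDsq : D * D ≤ ε^3 * n^2 / 100 := by
    have := mul_le_mul_of_nonneg_left hDn hD0
    linarith [this, hDn2]
  have hX : 0 < ε^2 * n^2 := by positivity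
  have hε3n : ε^3 * n^2 ≤ ε^2*n^2/10 := by
    have := mul_le_mul_of_nonneg_right hε'.le hX.le
    linarith [this]
  have hε4n : ε^4 * n^2 ≤ ε^2*n^2/100 := by
    have h1 : ε*ε ≤ (1/10)*(1/10) := mul_le_mul hε'.le hε'.le hε.le (by norm_num)
    have h2 : ε^2 ≤ 1/100 := by linarith [h1]
    have := mul_le_mul_of_nonneg_right h2 hX.le
    linarith only [this]
  have hDεn : 0 ≤ D * (ε*n) := by positivity
  have hDε2n : 0 ≤ D * (ε^2*n) := by positivity
  have h2 : (ε*(1+ε)*n/2 - D - ε^2*n/5) * ((n - ε^2*n/5) - (ε*(1+ε)*n/2 - D - ε^2*n/5))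
      ≤ s * ((n:ℝ) - s - u) := by nlinarith [key, hsEu]
  have h3 : ε * (n:ℝ)^2 / 2
      < (ε*(1+ε)*n/2 - D - ε^2*n/5) * ((n - ε^2*n/5) - (ε*(1+ε)*n/2 - D - ε^2*n/5)) := by
    nlinarith [hDn2, hDsq, hε3n, hε4n, hDεn, hDε2n, hX]
  linarith
end
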